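/- Let X be a Banach space, let {f_n : n ∈ ℕ} ⊂ X* be a countable relative boundary, and let (a_n)_{n∈ℕ} be a decreasing sequence of real numbers with a_n > 1 for all n and a_n → 1. Then the set {a_n f_n : n ∈ ℕ} has property (*). -/

import Mathlib

open NormedSpace Filter Set Topology Pointwise

noncomputable section

/-- `g` is a weak-* limit point of `F`: every weak-* neighbourhood of `g`
contains infinitely many points of `F`. -/
def IsWeakStarLimitPoint {X : Type*} [NormedAddCommGroup X] [NormedSpace ℝ X]
    (F : Set (StrongDual ℝ X)) (g : StrongDual ℝ X) : Prop :=
  ∀ U : Set (WeakDual ℝ X), IsOpen U → StrongDual.toWeakDual g ∈ U →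
    {f : StrongDual ℝ X | f ∈ F ∧ StrongDual.toWeakDual f ∈ U}.Infinite

/-- Property (*) of a set of functionals. -/
def PropertyStar {X : Type*} [NormedAddCommGroup X] [NormedSpace ℝ X]
    (F : Set (StrongDual ℝ X)) : Prop :=
  ∀ g : StrongDual ℝ X, IsWeakStarLimitPoint F g →
    ∀ x : X, sSup ((fun f : StrongDual ℝ X => f x) '' F) = 1 → g x < 1

/-- `F` is a relative boundary. -/
def IsRelativeBoundary {X : Type*} [NormedAddCommGroup X] [NormedSpace ℝ X]
    (F : Set (StrongDual ℝ X)) : Prop :=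
  ∀ x : X, sSup ((fun f : StrongDual ℝ X => f x) '' F) = 1 → ∃ f ∈ F, f x = 1

/-! Suppose `g` is a weak-* limit point of `{aₙ fₙ}` with `g x ≥ 1 = sup aₙ fₙ(x)`. Then
`fₙ(x) < 1` for every `n`, since `aₙ > 1`, while `aₙ fₙ(x)` comes arbitrarily close to `1` for
infinitely many `n`; as `aₙ → 1` this forces `sup fₙ(x) = 1`, and the relative boundary
`{fₙ}` would have to attain this supremum. -/

theorem image_eval_range {X ι : Type*} [NormedAddCommGroup X] [NormedSpace ℝ X]
    (φ : ι → StrongDual ℝ X) (x : X) :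
    (fun f : StrongDual ℝ X => f x) '' range φ = range fun i => φ i x :=
  (range_comp _ _).symm

theorem IsWeakStarLimitPoint.frequently_lt {X : Type*} [NormedAddCommGroup X]
    [NormedSpace ℝ X] {φ : ℕ → StrongDual ℝ X} {g : StrongDual ℝ X}
    (hg : IsWeakStarLimitPoint (range φ) g) {x : X} {r : ℝ} (hr : r < g x) :
    ∃ᶠ n in atTop, r < φ n x := by
  have hinf := hg _ (isOpen_Ioi.preimage (WeakDual.eval_continuous x)) hr
  rw [Nat.frequently_atTop_iff_infinite]
  refine fun hfin => hinf ((hfin.image φ).subset ?_)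
  rintro _ ⟨⟨n, rfl⟩, hn⟩
  exact mem_image_of_mem φ hn

theorem Real.le_of_sSup_range_eq {ι : Type*} {v : ι → ℝ} {c : ℝ} (hc : c ≠ 0)
    (h : sSup (range v) = c) (i : ι) : v i ≤ c := by
  have hbdd : BddAbove (range v) := by
    by_contra hnot
    exact hc (h ▸ Real.sSup_of_not_bddAbove hnot)
  exact h ▸ le_csSup hbdd (mem_range_self i)

theorem Real.sSup_range_eq_one_of_frequently {a u : ℕ → ℝ} (ha : ∀ n, 0 < a n)
    (hlim : Tendsto a atTop (𝓝 1)) (hu : ∀ n, u n ≤ 1)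
    (hfreq : ∀ r < 1, ∃ᶠ n in atTop, r < a n * u n) : sSup (range u) = 1 := by
  set c := sSup (range u)
  have hbdd : BddAbove (range u) := ⟨1, forall_mem_range.2 hu⟩
  refine le_antisymm (csSup_le (range_nonempty u) (forall_mem_range.2 hu)) ?_
  by_contra! hc
  have hac : Tendsto (fun n => a n * c) atTop (𝓝 c) := by
    simpa using hlim.mul_const c
  have hsmall : ∀ᶠ n in atTop, a n * c < (1 + c) / 2 :=
    hac.eventually (gt_mem_nhds (by linarith))
  obtain ⟨n, hbig, hlow⟩ := ((hfreq ((1 + c) / 2) (by linarith)).and_eventually hsmall).exists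
  have hn : a n * u n ≤ a n * c :=
    mul_le_mul_of_nonneg_left (le_csSup hbdd (mem_range_self n)) (ha n).le
  linarith

theorem stmt0 {X : Type*} [NormedAddCommGroup X] [NormedSpace ℝ X]
    (f : ℕ → StrongDual ℝ X) (a : ℕ → ℝ)
    (hrel : IsRelativeBoundary (Set.range f))
    (ha : ∀ n, 1 < a n)
    (hlim : Tendsto a atTop (𝓝 1)) :
    PropertyStar (Set.range fun n => a n • f n) := by
  intro g hg x hx
  rw [image_eval_range] at hx
  by_contra! hgx
  have hle (n : ℕ) : a n * f n x ≤ 1 := Real.le_of_sSup_range_eq one_ne_zero hx n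
  have hlt (n : ℕ) : f n x < 1 := by
    by_contra! h
    nlinarith [ha n, hle n]
  have hfreq (r : ℝ) (hr : r < 1) : ∃ᶠ n in atTop, r < a n * f n x :=
    hg.frequently_lt (hr.trans_le hgx)
  have hsup : sSup (range fun n => f n x) = 1 :=
    Real.sSup_range_eq_one_of_frequently (fun n => one_pos.trans (ha n)) hlim
      (fun n => (hlt n).le) hfreq
  obtain ⟨_, ⟨n, rfl⟩, hn⟩ := hrel x (by rwa [image_eval_range])
  exact (hlt n).ne hn

end
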